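/- Let 1 ≤ p < +∞. Every function g in the Bloch space 𝓑 belongs to RM(p,0); that is, if g is analytic on 𝔻 with sup_{z∈𝔻}(1-|z|²)|g'(z)| < ∞, then lim_{ρ→1⁻} sup_θ (∫_ρ¹ |g(re^{iθ})|^p dr)^{1/p} = 0. -/

import Mathlib

/-!
Integrating `(1 - |w|) |g'(w)| ≤ M` along the radius `[0, z]` gives the classical growth estimate
`|g(z)| ≤ |g(0)| + M log (1/(1 - |z|))`. A logarithm is dominated by every positive power, so
`|g(re^{iθ})|^p ≤ C (1 - r)^{-1/2}` uniformly in `θ`, and `∫_ρ¹ (1 - r)^{-1/2} dr = 2 (1 - ρ)^{1/2}`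
tends to `0` as `ρ → 1`.
-/

open MeasureTheory Metric Set Filter
open scoped ENNReal Topology

noncomputable def circ (r θ : ℝ) : ℂ := r * Complex.exp (θ * Complex.I)

lemma norm_circ (r θ : ℝ) : ‖circ r θ‖ = |r| := by
  simp [circ, Complex.norm_exp_ofReal_mul_I]

lemma add_mul_log_le_mul_rpow {a M ε x : ℝ} (ha : 0 ≤ a) (hM : 0 ≤ M) (hε : 0 < ε)
    (hx : 1 ≤ x) : a + M * Real.log x ≤ (a + M / ε) * x ^ ε := by
  have hlog : Real.log x ≤ x ^ ε / ε := Real.log_le_rpow_div (by linarith) hε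
  have hone : 1 ≤ x ^ ε := Real.one_le_rpow hx hε.le
  calc a + M * Real.log x ≤ a * x ^ ε + M * (x ^ ε / ε) := by gcongr; nlinarith
    _ = (a + M / ε) * x ^ ε := by ring

section Bloch

variable {g : ℂ → ℂ} {M : ℝ}

lemma nonneg_of_bloch_bound (hM : ∀ z ∈ ball (0:ℂ) 1, (1 - ‖z‖ ^ 2) * ‖deriv g z‖ ≤ M) :
    0 ≤ M := by
  have h0 := hM 0 (mem_ball_self one_pos)
  rw [norm_zero, zero_pow two_ne_zero, sub_zero, one_mul] at h0
  exact (norm_nonneg _).trans h0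

lemma one_sub_norm_mul_norm_deriv_le_of_bloch_bound
    (hM : ∀ z ∈ ball (0:ℂ) 1, (1 - ‖z‖ ^ 2) * ‖deriv g z‖ ≤ M) {z : ℂ}
    (hz : z ∈ ball (0:ℂ) 1) : (1 - ‖z‖) * ‖deriv g z‖ ≤ M := by
  have hz1 : ‖z‖ < 1 := mem_ball_zero_iff.mp hz
  refine le_trans (mul_le_mul_of_nonneg_right ?_ (norm_nonneg _)) (hM z hz)
  nlinarith [norm_nonneg z]

lemma norm_le_add_mul_log_of_bloch_bound (hg : DifferentiableOn ℂ g (ball (0:ℂ) 1))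
    (hM : ∀ z ∈ ball (0:ℂ) 1, (1 - ‖z‖ ^ 2) * ‖deriv g z‖ ≤ M) {z : ℂ}
    (hz : z ∈ ball (0:ℂ) 1) : ‖g z‖ ≤ ‖g 0‖ + M * Real.log (1 - ‖z‖)⁻¹ := by
  have hz1 : ‖z‖ < 1 := mem_ball_zero_iff.mp hz
  have hseg : ∀ t ∈ Icc (0:ℝ) 1, (t : ℂ) * z ∈ ball (0:ℂ) 1 := fun t ht => by
    rw [mem_ball_zero_iff, norm_mul, Complex.norm_real, Real.norm_eq_abs, abs_of_nonneg ht.1]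
    nlinarith [norm_nonneg z, ht.2]
  have hpos : ∀ t ∈ Icc (0:ℝ) 1, 0 < 1 - t * ‖z‖ := fun t ht => by
    nlinarith [norm_nonneg z, ht.2, ht.1]
  have hf : ∀ t ∈ Icc (0:ℝ) 1,
      HasDerivAt (fun t : ℝ => g (t * z)) (z • deriv g (t * z)) t := fun t ht => by
    have hline : HasDerivAt (fun t : ℝ => (t : ℂ) * z) z t := by
      simpa using (Complex.ofRealCLM.hasDerivAt (x := t)).mul_const z
    have hgt := (hg.differentiableAt (isOpen_ball.mem_nhds (hseg t ht))).hasDerivAt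
    exact hgt.scomp t hline
  have hB : ∀ t ∈ Icc (0:ℝ) 1, HasDerivAt (fun t : ℝ => ‖g 0‖ - M * Real.log (1 - t * ‖z‖))
      (M * ‖z‖ / (1 - t * ‖z‖)) t := fun t ht => by
    have hlin : HasDerivAt (fun t : ℝ => 1 - t * ‖z‖) (-‖z‖) t := by
      simpa using ((hasDerivAt_id t).mul_const ‖z‖).const_sub 1
    exact (((hlin.log (hpos t ht).ne').const_mul M).const_sub ‖g 0‖).congr_deriv (by ring)
  have hbound : ∀ t ∈ Ico (0:ℝ) 1, ‖z • deriv g (t * z)‖ ≤ M * ‖z‖ / (1 - t * ‖z‖) :=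
    fun t ht => by
    have hd := one_sub_norm_mul_norm_deriv_le_of_bloch_bound hM (hseg t (Ico_subset_Icc_self ht))
    rw [norm_mul, Complex.norm_real, Real.norm_eq_abs, abs_of_nonneg ht.1] at hd
    rw [norm_smul, le_div_iff₀ (hpos t (Ico_subset_Icc_self ht))]
    nlinarith [norm_nonneg z]
  have key := image_norm_le_of_norm_deriv_right_le_deriv_boundary'
    (f := fun t : ℝ => g (t * z)) (B := fun t : ℝ => ‖g 0‖ - M * Real.log (1 - t * ‖z‖))
    (fun t ht => (hf t ht).continuousAt.continuousWithinAt)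
    (fun t ht => (hf t (Ico_subset_Icc_self ht)).hasDerivWithinAt) (by simp)
    (fun t ht => (hB t ht).continuousAt.continuousWithinAt)
    (fun t ht => (hB t (Ico_subset_Icc_self ht)).hasDerivWithinAt) hbound
    (right_mem_Icc.mpr zero_le_one)
  simpa [Real.log_inv, sub_eq_add_neg] using key

lemma norm_le_mul_rpow_of_bloch_bound (hg : DifferentiableOn ℂ g (ball (0:ℂ) 1))
    (hM : ∀ z ∈ ball (0:ℂ) 1, (1 - ‖z‖ ^ 2) * ‖deriv g z‖ ≤ M) {ε : ℝ} (hε : 0 < ε) {z : ℂ}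
    (hz : z ∈ ball (0:ℂ) 1) : ‖g z‖ ≤ (‖g 0‖ + M / ε) * (1 - ‖z‖) ^ (-ε) := by
  have hz1 : 0 < 1 - ‖z‖ := sub_pos.mpr (mem_ball_zero_iff.mp hz)
  rw [Real.rpow_neg hz1.le, ← Real.inv_rpow hz1.le]
  exact (norm_le_add_mul_log_of_bloch_bound hg hM hz).trans <|
    add_mul_log_le_mul_rpow (norm_nonneg _) (nonneg_of_bloch_bound hM) hε
      (one_le_inv₀ hz1 |>.mpr (by linarith [norm_nonneg z]))

lemma norm_rpow_le_of_bloch_bound (hg : DifferentiableOn ℂ g (ball (0:ℂ) 1))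
    (hM : ∀ z ∈ ball (0:ℂ) 1, (1 - ‖z‖ ^ 2) * ‖deriv g z‖ ≤ M) {p : ℝ} (hp : 0 < p) {z : ℂ}
    (hz : z ∈ ball (0:ℂ) 1) :
    ‖g z‖ ^ p ≤ (‖g 0‖ + 2 * p * M) ^ p * (1 - ‖z‖) ^ (-(1/2) : ℝ) := by
  have hC : 0 ≤ ‖g 0‖ + 2 * p * M := by have := nonneg_of_bloch_bound hM; positivity
  have hz1 : 0 ≤ 1 - ‖z‖ := by linarith [mem_ball_zero_iff.mp hz]
  have h := norm_le_mul_rpow_of_bloch_bound hg hM (inv_pos.mpr (by positivity : 0 < 2 * p)) hz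
  rw [div_inv_eq_mul, mul_comm M] at h
  calc ‖g z‖ ^ p ≤ ((‖g 0‖ + 2 * p * M) * (1 - ‖z‖) ^ (-(2 * p)⁻¹)) ^ p :=
        Real.rpow_le_rpow (norm_nonneg _) h hp.le
    _ = (‖g 0‖ + 2 * p * M) ^ p * (1 - ‖z‖) ^ (-(1/2) : ℝ) := by
        rw [Real.mul_rpow hC (Real.rpow_nonneg hz1 _), ← Real.rpow_mul hz1]
        congr 2
        field_simp

lemma lintegral_norm_circ_rpow_le_of_bloch_bound (hg : DifferentiableOn ℂ g (ball (0:ℂ) 1))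
    (hM : ∀ z ∈ ball (0:ℂ) 1, (1 - ‖z‖ ^ 2) * ‖deriv g z‖ ≤ M) {p ρ : ℝ} (hp : 0 < p)
    (hρ : 0 ≤ ρ) (θ : ℝ) :
    ∫⁻ r in Ioc ρ 1, ENNReal.ofReal (‖g (circ r θ)‖ ^ p) ≤
      ENNReal.ofReal ((‖g 0‖ + 2 * p * M) ^ p) *
        ∫⁻ r in Ioc ρ 1, ENNReal.ofReal ((1 - r) ^ (-(1/2) : ℝ)) := by
  have hC : 0 ≤ (‖g 0‖ + 2 * p * M) ^ p := by
    have := nonneg_of_bloch_bound hM; positivity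
  rw [← lintegral_const_mul' _ _ ENNReal.ofReal_ne_top]
  -- at `r = 1` the real power `0 ^ (-1/2)` is `0`, so the bound only holds off this null set
  refine lintegral_mono_ae (ae_restrict_of_ae_eq_of_ae_restrict Ioo_ae_eq_Ioc ?_)
  refine (ae_restrict_iff' measurableSet_Ioo).mpr (Eventually.of_forall fun r hr => ?_)
  have hr0 : 0 ≤ r := hρ.trans hr.1.le
  have hz : circ r θ ∈ ball (0:ℂ) 1 := by
    rw [mem_ball_zero_iff, norm_circ, abs_of_nonneg hr0]; exact hr.2
  have h := norm_rpow_le_of_bloch_bound hg hM hp hz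
  rw [norm_circ, abs_of_nonneg hr0] at h
  rw [← ENNReal.ofReal_mul hC]
  exact ENNReal.ofReal_le_ofReal h

end Bloch

lemma lintegral_Ioc_one_sub_rpow {s ρ : ℝ} (hs : -1 < s) (hρ : ρ ≤ 1) :
    ∫⁻ r in Ioc ρ 1, ENNReal.ofReal ((1 - r) ^ s) =
      ENNReal.ofReal ((1 - ρ) ^ (s + 1) / (s + 1)) := by
  have hint : IntegrableOn (fun r : ℝ => (1 - r) ^ s) (Ioc ρ 1) := by
    refine (intervalIntegrable_iff_integrableOn_Ioc_of_le hρ).mp ?_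
    simpa using
      ((intervalIntegral.intervalIntegrable_rpow' hs (a := 0) (b := 1 - ρ)).comp_sub_left 1).symm
  have hnonneg : 0 ≤ᵐ[volume.restrict (Ioc ρ 1)] fun r : ℝ => (1 - r) ^ s :=
    (ae_restrict_iff' measurableSet_Ioc).mpr
      (Eventually.of_forall fun r hr => Real.rpow_nonneg (sub_nonneg.mpr hr.2) s)
  rw [← ofReal_integral_eq_lintegral_ofReal hint hnonneg, ← intervalIntegral.integral_of_le hρ,
    intervalIntegral.integral_comp_sub_left (fun u : ℝ => u ^ s), integral_rpow (Or.inl hs)]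
  simp [Real.zero_rpow (by linarith : s + 1 ≠ 0)]

lemma tendsto_lintegral_Ioc_one_sub_rpow {s : ℝ} (hs : -1 < s) :
    Tendsto (fun ρ : ℝ => ∫⁻ r in Ioc ρ 1, ENNReal.ofReal ((1 - r) ^ s)) (𝓝[<] 1) (𝓝 0) := by
  have hcont : ContinuousAt (fun ρ : ℝ => ENNReal.ofReal ((1 - ρ) ^ (s + 1) / (s + 1))) 1 :=
    ENNReal.continuous_ofReal.continuousAt.comp <|
      ((Real.continuousAt_rpow_const _ _ (Or.inr (by linarith))).comp
        (continuousAt_const.sub continuousAt_id)).div_const _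
  have h := hcont.continuousWithinAt (s := Iio 1)
  rw [ContinuousWithinAt, sub_self, Real.zero_rpow (by linarith), zero_div,
    ENNReal.ofReal_zero] at h
  exact h.congr' (eventually_nhdsWithin_of_forall fun ρ hρ =>
    (lintegral_Ioc_one_sub_rpow hs (le_of_lt hρ)).symm)

/-- Let `1 ≤ p < ∞`. Every Bloch function belongs to `RM(p,0)`: if `g` is
analytic on the unit disc with `sup_{z∈𝔻} (1-|z|²)|g'(z)| < ∞`, then
`lim_{ρ→1⁻} sup_θ (∫_ρ¹ |g(re^{iθ})|^p dr)^{1/p} = 0`. -/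
theorem stmt8 (p : ℝ) (hp : 1 ≤ p) (g : ℂ → ℂ)
    (hg : DifferentiableOn ℂ g (ball (0:ℂ) 1))
    (hBloch : ∃ M : ℝ, ∀ z ∈ ball (0:ℂ) 1, (1 - ‖z‖ ^ 2) * ‖deriv g z‖ ≤ M) :
    Tendsto (fun ρ : ℝ => ⨆ θ : ℝ,
        (∫⁻ r in Ioc ρ 1, ENNReal.ofReal (‖g (circ r θ)‖ ^ p)) ^ (1/p))
      (nhdsWithin 1 (Iio (1:ℝ))) (nhds 0) := by
  obtain ⟨M, hM⟩ := hBloch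
  have hp0 : 0 < p := by linarith
  set C := ENNReal.ofReal ((‖g 0‖ + 2 * p * M) ^ p)
  have hle : ∀ᶠ ρ in 𝓝[<] 1,
      (⨆ θ : ℝ, (∫⁻ r in Ioc ρ 1, ENNReal.ofReal (‖g (circ r θ)‖ ^ p)) ^ (1/p)) ≤
        (C * ∫⁻ r in Ioc ρ 1, ENNReal.ofReal ((1 - r) ^ (-(1/2) : ℝ))) ^ (1/p) := by
    filter_upwards [Ioo_mem_nhdsLT zero_lt_one] with ρ hρ
    exact iSup_le fun θ => ENNReal.rpow_le_rpow
      (lintegral_norm_circ_rpow_le_of_bloch_bound hg hM hp0 hρ.1.le θ) (by positivity)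
  have hlim : Tendsto (fun ρ : ℝ =>
      (C * ∫⁻ r in Ioc ρ 1, ENNReal.ofReal ((1 - r) ^ (-(1/2) : ℝ))) ^ (1/p)) (𝓝[<] 1) (𝓝 0) := by
    have h := ((ENNReal.continuous_rpow_const (y := 1 / p)).tendsto _).comp
      (ENNReal.Tendsto.const_mul (a := C)
        (tendsto_lintegral_Ioc_one_sub_rpow (s := -(1/2)) (by norm_num))
        (Or.inr ENNReal.ofReal_ne_top))
    rwa [mul_zero, ENNReal.zero_rpow_of_pos (by positivity)] at h
  exact tendsto_of_tendsto_of_tendsto_of_le_of_le' tendsto_const_nhds hlim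
    (Eventually.of_forall fun _ => zero_le) hle
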